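/- arXiv:1309.5547 — 7 statements merged into one kernel-verified Lean document; each statement's English description precedes it below -/
import Mathlib

section
/- Let λ ∈ (2/3,1], ρ ∈ [0,1], α_k = 2/(λ(k+2)), γ_1 = 1, γ_k = (1 - λα_k)γ_{k-1} for k ≥ 2, and Γ_k := (γ_1^{-1}α_1^{1+ρ}, …, γ_k^{-1}α_k^{1+ρ}). Then γ_k ‖Γ_k‖_{2/(1-ρ)} ≤ (2^{3-ρ}/3^{(1-ρ)/2}) λ^{-(1+ρ)} k^{-(1+3ρ)/2} for all k ≥ 1, where ‖·‖_p is the l_p norm (interpreted as the max norm when ρ = 1). -/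
set_option maxHeartbeats 1600000 in
theorem stmt3 (lam ρ : ℝ) (hlam0 : 2 / 3 < lam) (hlam1 : lam ≤ 1)
    (hρ0 : 0 ≤ ρ) (hρ1 : ρ ≤ 1)
    (α γ : ℕ → ℝ)
    (hα : ∀ k : ℕ, 1 ≤ k → α k = 2 / (lam * ((k : ℝ) + 2)))
    (hγ1 : γ 1 = 1)
    (hγ : ∀ k : ℕ, 2 ≤ k → γ k = (1 - lam * α k) * γ (k - 1)) :
    ∀ k : ℕ, ∀ hk : 1 ≤ k,
      (ρ < 1 →
        γ k * (∑ i ∈ Finset.Icc 1 k, |(γ i)⁻¹ * α i ^ (1 + ρ)| ^ (2 / (1 - ρ))) ^ ((1 - ρ) / 2)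
          ≤ 2 ^ (3 - ρ) / 3 ^ ((1 - ρ) / 2) * lam ^ (-(1 + ρ)) * (k : ℝ) ^ (-((1 + 3 * ρ) / 2))) ∧
      (ρ = 1 →
        γ k * (Finset.Icc 1 k).sup' (Finset.nonempty_Icc.mpr hk)
            (fun i => |(γ i)⁻¹ * α i ^ (1 + ρ)|)
          ≤ 2 ^ (3 - ρ) / 3 ^ ((1 - ρ) / 2) * lam ^ (-(1 + ρ)) * (k : ℝ) ^ (-((1 + 3 * ρ) / 2))) := by
  have hlam : (0:ℝ) < lam := by linarith
  -- closed form of γ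
  have hγform : ∀ k : ℕ, 1 ≤ k → γ k = 6 / (((k:ℝ)+1)*((k:ℝ)+2)) := by
    intro k hk
    induction k, hk using Nat.le_induction with
    | base => rw [hγ1]; norm_num
    | succ n hn ih =>
      rw [hγ (n+1) (by omega)]
      simp only [Nat.add_sub_cancel]
      rw [ih, hα (n+1) (by omega)]
      have hn0 : (0:ℝ) < (n:ℝ) + 1 := by positivity
      push_cast
      field_simp
      ring
  -- closed form of the terms
  have hterm : ∀ i : ℕ, 1 ≤ i → |(γ i)⁻¹ * α i ^ (1 + ρ)| =
      (((i:ℝ)+1)*((i:ℝ)+2)/6) * (2/(lam*((i:ℝ)+2)))^(1+ρ) := by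
    intro i hi
    rw [hγform i hi, hα i hi, inv_div]
    have h2 : (0:ℝ) < (i:ℝ) + 2 := by positivity
    rw [abs_of_nonneg (by positivity)]
  -- sum of squares bound
  have sumsq : ∀ n : ℕ, 1 ≤ n →
      ∑ i ∈ Finset.Icc 1 n, ((i:ℝ)+1)^(2:ℕ) ≤ ((n:ℝ)+2)^(3:ℕ)/3 := by
    intro n hn
    induction n, hn using Nat.le_induction with
    | base => norm_num
    | succ m hm ih =>
      rw [Finset.sum_Icc_succ_top (by omega)]
      push_cast
      have hid : ((m:ℝ)+1+2)^(3:ℕ) = ((m:ℝ)+2)^(3:ℕ) + 3*((m:ℝ)+2)^(2:ℕ) + 3*((m:ℝ)+2) + 1 := by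
        ring
      have e : ((m:ℝ)+1+1)^(2:ℕ) = ((m:ℝ)+2)^(2:ℕ) := by ring
      have hm2 : (0:ℝ) ≤ (m:ℝ)+2 := by positivity
      linarith [ih, hid, e]
  intro k hk
  have hK : (1:ℝ) ≤ (k:ℝ) := by exact_mod_cast hk
  have hK0 : (0:ℝ) < (k:ℝ) := by linarith
  have h1 : (0:ℝ) < (k:ℝ)+1 := by linarith
  have h2 : (0:ℝ) < (k:ℝ)+2 := by linarith
  have hγk : γ k = 6/(((k:ℝ)+1)*((k:ℝ)+2)) := hγform k hk
  constructor
  · -- case ρ < 1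
    intro hρlt
    have h1ρ : (0:ℝ) < 1 - ρ := by linarith
    set D : ℝ := 2^(1+ρ)*lam^(-(1+ρ))/6 with hDdef
    have hD0 : 0 ≤ D := by positivity
    -- termwise bound raised to the power p = 2/(1-ρ)
    have htb : ∀ i ∈ Finset.Icc 1 k, |(γ i)⁻¹ * α i ^ (1+ρ)| ^ (2/(1-ρ))
        ≤ D ^ (2/(1-ρ)) * (((i:ℝ))+1)^(2:ℕ) := by
      intro i hi
      simp only [Finset.mem_Icc] at hi
      set x : ℝ := (i:ℝ) with hx
      have hx0 : (0:ℝ) ≤ x := by positivity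
      have hx1 : (0:ℝ) < x+1 := by linarith
      have hx2 : (0:ℝ) < x+2 := by linarith
      have step1 : |(γ i)⁻¹ * α i ^ (1+ρ)| ≤ D * (x+1)^(1-ρ) := by
        rw [hterm i hi.1]
        have e1 : (2/(lam*(x+2)))^(1+ρ) = 2^(1+ρ) * lam^(-(1+ρ)) * ((x+2)^(-ρ) * (x+2)⁻¹) := by
          rw [Real.div_rpow (by norm_num) (by positivity), Real.mul_rpow hlam.le hx2.le,
            Real.rpow_neg hlam.le, ← Real.rpow_neg_one (x+2), ← Real.rpow_add hx2,
            show -ρ + -1 = -(1+ρ) by ring, Real.rpow_neg hx2.le]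
          field_simp
        have e2 : (x+1)^(1-ρ) = (x+1) * (x+1)^(-ρ) := by
          nth_rewrite 2 [← Real.rpow_one (x+1)]
          rw [← Real.rpow_add hx1, show (1:ℝ) + -ρ = 1 - ρ by ring]
        rw [e1, e2]
        have hmono : (x+2)^(-ρ) ≤ (x+1)^(-ρ) :=
          Real.rpow_le_rpow_of_nonpos hx1 (by linarith) (by linarith)
        have hrw : (x+1)*(x+2)/6 * (2^(1+ρ) * lam^(-(1+ρ)) * ((x+2)^(-ρ) * (x+2)⁻¹))
            = (2^(1+ρ)*lam^(-(1+ρ))/6 * (x+1)) * (x+2)^(-ρ) := by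
          field_simp
        rw [hrw, hDdef, show (2^(1+ρ)*lam^(-(1+ρ))/6) * ((x+1) * (x+1)^(-ρ))
            = (2^(1+ρ)*lam^(-(1+ρ))/6 * (x+1)) * (x+1)^(-ρ) by ring]
        exact mul_le_mul_of_nonneg_left hmono (by positivity)
      calc |(γ i)⁻¹ * α i ^ (1+ρ)| ^ (2/(1-ρ)) ≤ (D * (x+1)^(1-ρ)) ^ (2/(1-ρ)) :=
            Real.rpow_le_rpow (abs_nonneg _) step1 (by positivity)
        _ = D ^ (2/(1-ρ)) * (x+1)^(2:ℕ) := by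
            rw [Real.mul_rpow hD0 (by positivity), ← Real.rpow_natCast (x+1) 2]
            congr 1
            rw [← Real.rpow_mul hx1.le,
              show (1-ρ) * (2/(1-ρ)) = ((2:ℕ):ℝ) by push_cast; field_simp]
    have hsum : (∑ i ∈ Finset.Icc 1 k, |(γ i)⁻¹ * α i ^ (1+ρ)| ^ (2/(1-ρ)))
        ≤ D ^ (2/(1-ρ)) * (((k:ℝ)+2)^(3:ℕ)/3) := by
      calc (∑ i ∈ Finset.Icc 1 k, |(γ i)⁻¹ * α i ^ (1+ρ)| ^ (2/(1-ρ)))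
          ≤ ∑ i ∈ Finset.Icc 1 k, D ^ (2/(1-ρ)) * (((i:ℝ))+1)^(2:ℕ) :=
            Finset.sum_le_sum htb
        _ = D ^ (2/(1-ρ)) * ∑ i ∈ Finset.Icc 1 k, (((i:ℝ))+1)^(2:ℕ) := by
            rw [Finset.mul_sum]
        _ ≤ D ^ (2/(1-ρ)) * (((k:ℝ)+2)^(3:ℕ)/3) :=
            mul_le_mul_of_nonneg_left (sumsq k hk) (Real.rpow_nonneg hD0 _)
    have hS0 : 0 ≤ ∑ i ∈ Finset.Icc 1 k, |(γ i)⁻¹ * α i ^ (1+ρ)| ^ (2/(1-ρ)) :=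
      Finset.sum_nonneg fun i _ => Real.rpow_nonneg (abs_nonneg _) _
    have hSq : (∑ i ∈ Finset.Icc 1 k, |(γ i)⁻¹ * α i ^ (1+ρ)| ^ (2/(1-ρ))) ^ ((1-ρ)/2)
        ≤ D * ((((k:ℝ)+2)^(3:ℕ)/3) ^ ((1-ρ)/2)) := by
      calc (∑ i ∈ Finset.Icc 1 k, |(γ i)⁻¹ * α i ^ (1+ρ)| ^ (2/(1-ρ))) ^ ((1-ρ)/2)
          ≤ (D ^ (2/(1-ρ)) * (((k:ℝ)+2)^(3:ℕ)/3)) ^ ((1-ρ)/2) :=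
            Real.rpow_le_rpow hS0 hsum (by positivity)
        _ = D * ((((k:ℝ)+2)^(3:ℕ)/3) ^ ((1-ρ)/2)) := by
            rw [Real.mul_rpow (Real.rpow_nonneg hD0 _) (by positivity),
              ← Real.rpow_mul hD0, show (2/(1-ρ)) * ((1-ρ)/2) = 1 by field_simp,
              Real.rpow_one]
    -- key scalar inequality
    set K : ℝ := (k:ℝ) with hKdef
    set a : ℝ := (1-3*ρ)/2 with ha
    have hKa : K ^ a * K ^ (1-a) = K := by
      rw [← Real.rpow_add hK0, show a + (1-a) = 1 by ring, Real.rpow_one]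
    have key : 2^(1+ρ) * ((K+2)^a * K^(1-a)) ≤ 2^(3-ρ) * (K+1) := by
      by_cases hc : ρ ≤ 1/3
      · have ha0 : 0 ≤ a := by rw [ha]; linarith
        have h3a : (3:ℝ)^a ≤ 2 := by
          have l1 : (3:ℝ)^a ≤ 3^(1/2:ℝ) :=
            Real.rpow_le_rpow_of_exponent_le (by norm_num) (by rw [ha]; linarith)
          have l2 : (3:ℝ)^(1/2:ℝ) ≤ 4^(1/2:ℝ) :=
            Real.rpow_le_rpow (by norm_num) (by norm_num) (by norm_num)
          have l3 : (4:ℝ)^(1/2:ℝ) = 2 := by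
            rw [show (4:ℝ) = 2^(2:ℝ) by
                rw [show (2:ℝ) = ((2:ℕ):ℝ) by norm_num, Real.rpow_natCast]; norm_num,
              ← Real.rpow_mul (by norm_num)]
            norm_num
          linarith
        have hb : (K+2)^a ≤ 2 * K^a := by
          calc (K+2)^a ≤ (3*K)^a := Real.rpow_le_rpow (by linarith) (by linarith) ha0
            _ = 3^a * K^a := Real.mul_rpow (by norm_num) hK0.le
            _ ≤ 2 * K^a := mul_le_mul_of_nonneg_right h3a (Real.rpow_nonneg hK0.le a)
        have hexp : (2:ℝ)^(1+ρ) * 2 ≤ 2^(3-ρ) := by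
          rw [← Real.rpow_add_one (by norm_num : (2:ℝ) ≠ 0)]
          exact Real.rpow_le_rpow_of_exponent_le (by norm_num) (by linarith)
        calc 2^(1+ρ) * ((K+2)^a * K^(1-a)) ≤ 2^(1+ρ) * (2 * K^a * K^(1-a)) := by
              apply mul_le_mul_of_nonneg_left _ (Real.rpow_nonneg (by norm_num) _)
              exact mul_le_mul_of_nonneg_right hb (Real.rpow_nonneg hK0.le _)
          _ = (2^(1+ρ) * 2) * K := by rw [mul_assoc 2, hKa]; ring
          _ ≤ 2^(3-ρ) * (K+1) := by
              apply mul_le_mul hexp (by linarith) hK0.le (Real.rpow_nonneg (by norm_num) _)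
      · have ha0 : a ≤ 0 := by rw [ha]; push_neg at hc; linarith
        have hb : (K+2)^a ≤ K^a := Real.rpow_le_rpow_of_nonpos hK0 (by linarith) ha0
        have hexp : (2:ℝ)^(1+ρ) ≤ 2^(3-ρ) :=
          Real.rpow_le_rpow_of_exponent_le (by norm_num) (by linarith)
        calc 2^(1+ρ) * ((K+2)^a * K^(1-a)) ≤ 2^(1+ρ) * (K^a * K^(1-a)) := by
              apply mul_le_mul_of_nonneg_left _ (Real.rpow_nonneg (by norm_num) _)
              exact mul_le_mul_of_nonneg_right hb (Real.rpow_nonneg hK0.le _)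
          _ = 2^(1+ρ) * K := by rw [hKa]
          _ ≤ 2^(3-ρ) * (K+1) := by
              apply mul_le_mul hexp (by linarith) hK0.le (Real.rpow_nonneg (by norm_num) _)
    -- endgame
    set q : ℝ := (1-ρ)/2 with hqdef
    have hq0 : 0 < q := by rw [hqdef]; linarith
    have hsplit : ((K+2)^(3:ℕ)/3)^q = ((K+2)^a * (K+2)) / 3^q := by
      rw [Real.div_rpow (by positivity) (by norm_num), ← Real.rpow_natCast (K+2) 3,
        ← Real.rpow_mul h2.le, show ((3:ℕ):ℝ) * q = a + 1 by rw [ha, hqdef]; push_cast; ring,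
        Real.rpow_add h2, Real.rpow_one]
    have hKm : K^(1-a) * K^(a-1) = 1 := by
      rw [← Real.rpow_add hK0, show (1-a) + (a-1) = 0 by ring, Real.rpow_zero]
    have keq : 2^(1+ρ)*((K+2)^a*K^(1-a))*K^(a-1) = 2^(1+ρ)*(K+2)^a := by
      rw [mul_assoc, mul_assoc, hKm, mul_one]
    have key2 : 2^(1+ρ)*(K+2)^a ≤ 2^(3-ρ)*(K+1)*K^(a-1) := by
      rw [← keq]
      exact mul_le_mul_of_nonneg_right key (Real.rpow_nonneg hK0.le _)
    have hneg : K^(-((1+3*ρ)/2)) = K^(a-1) := by rw [ha]; ring_nf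
    have hP3 : (0:ℝ) < (3:ℝ)^q := Real.rpow_pos_of_pos (by norm_num) q
    have hPL : (0:ℝ) ≤ lam^(-(1+ρ)) := Real.rpow_nonneg hlam.le _
    rw [hγk, hneg]
    calc 6/((K+1)*(K+2)) * (∑ i ∈ Finset.Icc 1 k, |(γ i)⁻¹ * α i ^ (1+ρ)| ^ (2/(1-ρ))) ^ q
        ≤ 6/((K+1)*(K+2)) * (D * (((K+2)^(3:ℕ)/3) ^ q)) := by
          apply mul_le_mul_of_nonneg_left hSq (by positivity)
      _ = (lam^(-(1+ρ))/(3^q*(K+1))) * (2^(1+ρ)*(K+2)^a) := by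
          rw [hsplit, hDdef]
          field_simp
      _ ≤ (lam^(-(1+ρ))/(3^q*(K+1))) * (2^(3-ρ)*(K+1)*K^(a-1)) := by
          apply mul_le_mul_of_nonneg_left key2 (by positivity)
      _ = 2^(3-ρ)/3^q * lam^(-(1+ρ)) * K^(a-1) := by
          field_simp
  · -- case ρ = 1
    intro hρeq
    subst hρeq
    have hsup : (Finset.Icc 1 k).sup' (Finset.nonempty_Icc.mpr hk)
        (fun i => |(γ i)⁻¹ * α i ^ ((1:ℝ) + 1)|) ≤ 2/(3*lam^2) := by
      apply Finset.sup'_le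
      intro i hi
      simp only [Finset.mem_Icc] at hi
      rw [hterm i hi.1]
      have hi2 : (0:ℝ) < (i:ℝ) + 2 := by positivity
      rw [show (1:ℝ)+1 = ((2:ℕ):ℝ) by norm_num, Real.rpow_natCast, div_pow, mul_pow,
        div_mul_div_comm, div_le_div_iff₀ (by positivity) (by positivity)]
      nlinarith [sq_nonneg lam, mul_pos hi2 hi2]
    have e1 : ((3:ℝ)-1) = ((2:ℕ):ℝ) := by norm_num
    have e2 : (((1:ℝ)-1)/2) = 0 := by norm_num
    have e3 : (-((1:ℝ)+1)) = -((2:ℕ):ℝ) := by norm_num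
    have e4 : (-(((1:ℝ)+3*1)/2)) = -((2:ℕ):ℝ) := by norm_num
    rw [hγk, e1, e2, e3, e4, Real.rpow_natCast, Real.rpow_zero,
      Real.rpow_neg hlam.le, Real.rpow_neg (by positivity), Real.rpow_natCast,
      Real.rpow_natCast]
    have hle : 6/(((k:ℝ)+1)*((k:ℝ)+2)) * (Finset.Icc 1 k).sup' (Finset.nonempty_Icc.mpr hk)
          (fun i => |(γ i)⁻¹ * α i ^ ((1:ℝ) + 1)|)
        ≤ 6/(((k:ℝ)+1)*((k:ℝ)+2)) * (2/(3*lam^2)) :=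
      mul_le_mul_of_nonneg_left hsup (by positivity)
    refine hle.trans ?_
    have hkk : (k:ℝ)^2 ≤ ((k:ℝ)+1)*((k:ℝ)+2) := by nlinarith
    have hrhs : (2:ℝ)^(2:ℕ)/1 * (lam^2)⁻¹ * (((k:ℝ))^2)⁻¹ = 4/(lam^2*((k:ℝ))^2) := by
      field_simp
      norm_num
    rw [hrhs, div_mul_div_comm, div_le_div_iff₀ (by positivity) (by positivity)]
    nlinarith [sq_nonneg lam, mul_pos h1 h2, sq_nonneg ((k:ℝ)*lam),
      mul_pos (mul_pos h1 h2) (pow_pos hlam 2), pow_pos hlam 2, pow_pos hK0 2]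
end

section
/- If α_k = 2/(k+1) for k ≥ 1, γ_1 = 1, γ_k = (1 - α_k)γ_{k-1} for k ≥ 2, and Γ_k := (γ_1^{-1}α_1^{1+ρ}, …, γ_k^{-1}α_k^{1+ρ}) for ρ ∈ [0,1], then γ_k = 2/(k(k+1)) and γ_k ‖Γ_k‖_{2/(1-ρ)} ≤ 2^{1+ρ} 3^{-(1-ρ)/2} k^{-(1+3ρ)/2} for all k ≥ 1. -/
theorem stmt6 (ρ : ℝ) (hρ0 : 0 ≤ ρ) (hρ1 : ρ ≤ 1)
    (α γ : ℕ → ℝ)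
    (hα : ∀ k : ℕ, 1 ≤ k → α k = 2 / ((k : ℝ) + 1))
    (hγ1 : γ 1 = 1)
    (hγ : ∀ k : ℕ, 2 ≤ k → γ k = (1 - α k) * γ (k - 1)) :
    ∀ k : ℕ, ∀ hk : 1 ≤ k,
      γ k = 2 / ((k : ℝ) * ((k : ℝ) + 1)) ∧
      (ρ < 1 →
        γ k * (∑ i ∈ Finset.Icc 1 k, |(γ i)⁻¹ * α i ^ (1 + ρ)| ^ (2 / (1 - ρ))) ^ ((1 - ρ) / 2)
          ≤ 2 ^ (1 + ρ) * 3 ^ (-((1 - ρ) / 2)) * (k : ℝ) ^ (-((1 + 3 * ρ) / 2))) ∧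
      (ρ = 1 →
        γ k * (Finset.Icc 1 k).sup' (Finset.nonempty_Icc.mpr hk)
            (fun i => |(γ i)⁻¹ * α i ^ (1 + ρ)|)
          ≤ 2 ^ (1 + ρ) * 3 ^ (-((1 - ρ) / 2)) * (k : ℝ) ^ (-((1 + 3 * ρ) / 2))) := by
  -- closed form for γ
  have hγval : ∀ k : ℕ, 1 ≤ k → γ k = 2 / ((k : ℝ) * ((k : ℝ) + 1)) := by
    intro k hk
    induction k with
    | zero => omega
    | succ n ih =>
      rcases Nat.lt_or_ge n 1 with h | h
      · interval_cases n
        · rw [hγ1]; norm_num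
      · have h2 : γ (n+1) = (1 - α (n+1)) * γ n := by simpa using hγ (n+1) (by omega)
        rw [h2, hα (n+1) (by omega), ih h]
        have hn0 : (0:ℝ) < (n:ℝ) := by exact_mod_cast h
        push_cast
        field_simp
        ring
  -- closed form for the terms
  have hterm : ∀ i : ℕ, 1 ≤ i →
      |(γ i)⁻¹ * α i ^ (1 + ρ)| = 2^ρ * (i:ℝ) * ((i:ℝ)+1)^(-ρ) := by
    intro i hi
    have hi0 : (0:ℝ) < (i:ℝ) := by exact_mod_cast hi
    have hi1 : (0:ℝ) < (i:ℝ) + 1 := by linarith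
    rw [hγval i hi, hα i hi]
    have h1 : ((2:ℝ)/((i:ℝ)*((i:ℝ)+1)))⁻¹ = (i:ℝ)*((i:ℝ)+1)/2 := by
      field_simp
    have h2 : ((2:ℝ)/((i:ℝ)+1)) ^ (1+ρ) = 2 * 2^ρ / (((i:ℝ)+1) * ((i:ℝ)+1)^ρ) := by
      rw [Real.div_rpow (by norm_num) hi1.le, Real.rpow_add two_pos, Real.rpow_one,
          Real.rpow_add hi1, Real.rpow_one]
    rw [h1, h2, abs_of_nonneg (by positivity), Real.rpow_neg hi1.le]
    have h3 : ((i:ℝ)+1)^ρ ≠ 0 := by positivity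
    field_simp
  -- sum of squares bound
  have hsq : ∀ k : ℕ, ∑ i ∈ Finset.Icc 1 k, ((i:ℝ))^(2:ℕ) ≤ (k:ℝ)*((k:ℝ)+1)^2/3 := by
    intro k
    induction k with
    | zero => simp
    | succ n ih =>
      rw [Finset.sum_Icc_succ_top (by omega)]
      push_cast
      nlinarith [ih, Nat.cast_nonneg (α := ℝ) n]
  intro k hk
  have hA0 : (0:ℝ) < (k:ℝ) := by exact_mod_cast hk
  have hB0 : (0:ℝ) < (k:ℝ) + 1 := by linarith
  refine ⟨hγval k hk, ?_, ?_⟩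
  · -- case ρ < 1
    intro hlt
    have h1ρ : (0:ℝ) < 1 - ρ := by linarith
    set a : ℝ := (1 - ρ) / 2 with ha
    set p : ℝ := 2 / (1 - ρ) with hp
    have ha0 : 0 < a := by positivity
    have hstep1 : ∀ i ∈ Finset.Icc 1 k,
        |(γ i)⁻¹ * α i ^ (1 + ρ)| ^ p ≤ (2:ℝ)^(2*ρ/(1-ρ)) * ((i:ℝ))^(2:ℕ) := by
      intro i hi
      have hi1 : 1 ≤ i := (Finset.mem_Icc.mp hi).1
      have hi0 : (0:ℝ) < (i:ℝ) := by exact_mod_cast hi1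
      have hi1' : (0:ℝ) < (i:ℝ) + 1 := by linarith
      have hmono : ((i:ℝ)+1)^(-ρ) ≤ (i:ℝ)^(-ρ) := by
        rw [Real.rpow_neg hi0.le, Real.rpow_neg hi1'.le]
        exact inv_anti₀ (Real.rpow_pos_of_pos hi0 ρ)
          (Real.rpow_le_rpow hi0.le (by linarith) hρ0)
      have hbase : |(γ i)⁻¹ * α i ^ (1 + ρ)| ≤ 2^ρ * (i:ℝ)^(1-ρ) := by
        rw [hterm i hi1]
        have hi2 : (i:ℝ)^(1-ρ) = (i:ℝ) * (i:ℝ)^(-ρ) := by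
          rw [show (1:ℝ)-ρ = 1 + (-ρ) by ring, Real.rpow_add hi0, Real.rpow_one]
        rw [hi2, mul_assoc]
        have h2ρ : (0:ℝ) ≤ 2^ρ := by positivity
        gcongr
      calc |(γ i)⁻¹ * α i ^ (1 + ρ)| ^ p ≤ (2^ρ * (i:ℝ)^(1-ρ)) ^ p :=
            Real.rpow_le_rpow (abs_nonneg _) hbase (by positivity)
        _ = (2:ℝ)^(2*ρ/(1-ρ)) * ((i:ℝ))^(2:ℕ) := by
            rw [Real.mul_rpow (by positivity) (by positivity),
              ← Real.rpow_mul (by norm_num), ← Real.rpow_mul hi0.le]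
            have e1 : ρ * p = 2*ρ/(1-ρ) := by rw [hp]; field_simp
            have e2 : (1-ρ) * p = 2 := by rw [hp]; field_simp
            rw [e1, e2]
            norm_num [Real.rpow_natCast]
    have hsum : (∑ i ∈ Finset.Icc 1 k, |(γ i)⁻¹ * α i ^ (1 + ρ)| ^ p)
        ≤ (2:ℝ)^(2*ρ/(1-ρ)) * ((k:ℝ)*((k:ℝ)+1)^2/3) := by
      calc (∑ i ∈ Finset.Icc 1 k, |(γ i)⁻¹ * α i ^ (1 + ρ)| ^ p)
          ≤ ∑ i ∈ Finset.Icc 1 k, (2:ℝ)^(2*ρ/(1-ρ)) * ((i:ℝ))^(2:ℕ) :=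
            Finset.sum_le_sum hstep1
        _ = (2:ℝ)^(2*ρ/(1-ρ)) * ∑ i ∈ Finset.Icc 1 k, ((i:ℝ))^(2:ℕ) := by
            rw [Finset.mul_sum]
        _ ≤ (2:ℝ)^(2*ρ/(1-ρ)) * ((k:ℝ)*((k:ℝ)+1)^2/3) := by
            have := hsq k
            gcongr
    have hsumnn : (0:ℝ) ≤ ∑ i ∈ Finset.Icc 1 k, |(γ i)⁻¹ * α i ^ (1 + ρ)| ^ p := by
      apply Finset.sum_nonneg
      intro i _
      positivity
    have hstep3 : (∑ i ∈ Finset.Icc 1 k, |(γ i)⁻¹ * α i ^ (1 + ρ)| ^ p) ^ a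
        ≤ ((2:ℝ)^(2*ρ/(1-ρ)) * ((k:ℝ)*((k:ℝ)+1)^2/3)) ^ a :=
      Real.rpow_le_rpow hsumnn hsum ha0.le
    have hkey : (2 / ((k:ℝ) * ((k:ℝ) + 1))) * ((2:ℝ)^(2*ρ/(1-ρ)) * ((k:ℝ)*((k:ℝ)+1)^2/3)) ^ a
        = 2^(1+ρ) * 3^(-a) * ((k:ℝ)^(a-1) * ((k:ℝ)+1)^(-ρ)) := by
      have e1 : ((2:ℝ)^(2*ρ/(1-ρ)))^a = 2^ρ := by
        rw [← Real.rpow_mul (by norm_num)]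
        congr 1
        field_simp
        ring
      rw [Real.mul_rpow (by positivity) (by positivity),
          Real.div_rpow (by positivity) (by norm_num),
          Real.mul_rpow hA0.le (by positivity), e1,
          ← Real.rpow_natCast ((k:ℝ)+1) 2, ← Real.rpow_mul hB0.le]
      have e2 : ((2:ℕ):ℝ) * a = 1 + (-ρ) := by push_cast [ha]; ring
      rw [e2, Real.rpow_add hB0, Real.rpow_one,
          Real.rpow_neg (by norm_num : (0:ℝ) ≤ 3),
          show a - 1 = a + (-1) by ring, Real.rpow_add hA0, Real.rpow_neg_one,
          Real.rpow_add two_pos, Real.rpow_one, Real.rpow_neg hB0.le]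
      have n1 : ((k:ℝ)+1)^ρ ≠ 0 := by positivity
      have n2 : ((3:ℝ))^a ≠ 0 := by positivity
      field_simp
    have hstep5 : (k:ℝ)^(a-1) * ((k:ℝ)+1)^(-ρ) ≤ (k:ℝ)^(-((1+3*ρ)/2)) := by
      have hmono : ((k:ℝ)+1)^(-ρ) ≤ (k:ℝ)^(-ρ) := by
        rw [Real.rpow_neg hA0.le, Real.rpow_neg hB0.le]
        exact inv_anti₀ (Real.rpow_pos_of_pos hA0 ρ)
          (Real.rpow_le_rpow hA0.le (by linarith) hρ0)
      calc (k:ℝ)^(a-1) * ((k:ℝ)+1)^(-ρ) ≤ (k:ℝ)^(a-1) * (k:ℝ)^(-ρ) := by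
            gcongr
        _ = (k:ℝ)^(-((1+3*ρ)/2)) := by
            rw [← Real.rpow_add hA0]
            congr 1
            rw [ha]; ring
    rw [hγval k hk]
    calc (2 / ((k:ℝ) * ((k:ℝ) + 1))) * (∑ i ∈ Finset.Icc 1 k, |(γ i)⁻¹ * α i ^ (1 + ρ)| ^ p) ^ a
        ≤ (2 / ((k:ℝ) * ((k:ℝ) + 1))) * ((2:ℝ)^(2*ρ/(1-ρ)) * ((k:ℝ)*((k:ℝ)+1)^2/3)) ^ a := by
          gcongr
      _ = 2^(1+ρ) * 3^(-a) * ((k:ℝ)^(a-1) * ((k:ℝ)+1)^(-ρ)) := hkey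
      _ ≤ 2^(1+ρ) * 3^(-a) * (k:ℝ)^(-((1+3*ρ)/2)) := by
          gcongr
  · -- case ρ = 1
    intro hρeq
    subst hρeq
    have hsup : (Finset.Icc 1 k).sup' (Finset.nonempty_Icc.mpr hk)
        (fun i => |(γ i)⁻¹ * α i ^ (1 + (1:ℝ))|) ≤ 2 := by
      apply Finset.sup'_le
      intro i hi
      have hi1 : 1 ≤ i := (Finset.mem_Icc.mp hi).1
      have hi0 : (0:ℝ) < (i:ℝ) := by exact_mod_cast hi1
      have hi1' : (0:ℝ) < (i:ℝ) + 1 := by linarith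
      rw [hterm i hi1, Real.rpow_one, Real.rpow_neg_one]
      rw [mul_assoc, mul_le_iff_le_one_right two_pos]
      rw [← div_eq_mul_inv, div_le_one hi1']
      linarith
    have hγk : γ k = 2 / ((k:ℝ) * ((k:ℝ) + 1)) := hγval k hk
    have hγnn : 0 ≤ γ k := by rw [hγk]; positivity
    have hrhs : 2 ^ ((1:ℝ) + 1) * 3 ^ (-((1 - (1:ℝ)) / 2)) * (k : ℝ) ^ (-((1 + 3 * (1:ℝ)) / 2))
        = 4 / ((k:ℝ)*(k:ℝ)) := by
      have e1 : ((1:ℝ) + 1) = ((2:ℕ):ℝ) := by norm_num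
      have e2 : (-((1 + 3 * (1:ℝ)) / 2)) = -((2:ℕ):ℝ) := by norm_num
      rw [e1, e2, Real.rpow_neg hA0.le, Real.rpow_natCast, Real.rpow_natCast]
      norm_num
      rw [div_eq_mul_inv]
      ring_nf
    rw [hrhs]
    calc γ k * _ ≤ (2 / ((k:ℝ) * ((k:ℝ) + 1))) * 2 := by
          rw [← hγk]; exact mul_le_mul_of_nonneg_left hsup hγnn
      _ = 4 / ((k:ℝ) * ((k:ℝ)+1)) := by ring
      _ ≤ 4 / ((k:ℝ)*(k:ℝ)) := by
          apply div_le_div_of_nonneg_left (by norm_num) (by positivity)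
          nlinarith
end

section
/- Let f be convex on a convex set X satisfying f(y) - f(x) - ⟨f'(x), y-x⟩ ≤ M/(1+ρ)‖y-x‖^{1+ρ} for all x,y ∈ X with M > 0, ρ ∈ [0,1]. Given points x_{k-1}, x_{k-1}^u ∈ X, α_k ∈ (0,1], let x_k^l = α_k x_{k-1} + (1-α_k) x_{k-1}^u, and suppose x_k ∈ X satisfies h(x_k^l, x_k) := f(x_k^l) + ⟨f'(x_k^l), x_k - x_k^l⟩ ≤ l for some l ∈ ℝ, and define x̃_k^u = α_k x_k + (1-α_k)x_{k-1}^u. Then f(x̃_k^u) ≤ (1-α_k)f(x_{k-1}^u) + α_k l + M/(1+ρ) ‖α_k(x_k - x_{k-1})‖^{1+ρ}. -/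
open scoped RealInnerProductSpace

theorem stmt9 {E : Type*} [NormedAddCommGroup E] [InnerProductSpace ℝ E]
    (X : Set E) (hX : Convex ℝ X) (f : E → ℝ) (f' : E → E) (M ρ : ℝ)
    (hM : 0 < M) (hρ0 : 0 ≤ ρ) (hρ1 : ρ ≤ 1)
    (hconv : ∀ x ∈ X, ∀ y ∈ X, f x + ⟪f' x, y - x⟫ ≤ f y)
    (hsmooth : ∀ x ∈ X, ∀ y ∈ X,
      f y - f x - ⟪f' x, y - x⟫ ≤ M / (1 + ρ) * ‖y - x‖ ^ (1 + ρ))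
    (xprev xu xk : E) (hxprev : xprev ∈ X) (hxu : xu ∈ X) (hxk : xk ∈ X)
    (αk l : ℝ) (hα0 : 0 < αk) (hα1 : αk ≤ 1)
    (hlevel : f (αk • xprev + (1 - αk) • xu) +
        ⟪f' (αk • xprev + (1 - αk) • xu), xk - (αk • xprev + (1 - αk) • xu)⟫ ≤ l) :
    f (αk • xk + (1 - αk) • xu) ≤
      (1 - αk) * f xu + αk * l + M / (1 + ρ) * ‖αk • (xk - xprev)‖ ^ (1 + ρ) := by
  set xl : E := αk • xprev + (1 - αk) • xu with hxl_def
  set xt : E := αk • xk + (1 - αk) • xu with hxt_def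
  have h1α : (0:ℝ) ≤ 1 - αk := by linarith
  have hxl : xl ∈ X := hX hxprev hxu hα0.le h1α (by ring)
  have hxt : xt ∈ X := hX hxk hxu hα0.le h1α (by ring)
  have hdiff : xt - xl = αk • (xk - xprev) := by
    rw [hxt_def, hxl_def]; module
  have hdecomp : xt - xl = αk • (xk - xl) + (1 - αk) • (xu - xl) := by
    rw [hxt_def, hxl_def]; module
  have hs := hsmooth xl hxl xt hxt
  have hc := hconv xl hxl xu hxu
  have hinner : ⟪f' xl, xt - xl⟫ = αk * ⟪f' xl, xk - xl⟫ + (1 - αk) * ⟪f' xl, xu - xl⟫ := by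
    rw [hdecomp, inner_add_right, real_inner_smul_right, real_inner_smul_right]
  rw [hinner, hdiff] at hs
  nlinarith [mul_le_mul_of_nonneg_left hlevel hα0.le,
    mul_le_mul_of_nonneg_left hc h1α]
end

section
/- Let X be a convex compact set, ω a differentiable strongly convex function on X with modulus σ_ω > 0, x_0 = argmin_{x∈X} d_ω where d_ω(x) := ω(x) - ω(x_0) - ⟨∇ω(x_0), x - x_0⟩. Suppose points x_1, …, x_k ∈ X satisfy ⟨∇d_ω(x_i), x_{i+1} - x_i⟩ ≥ 0 for each i = 1,…,k-1. Then (σ_ω/2) ∑_{i=1}^k ‖x_i - x_{i-1}‖² ≤ d_ω(x_k). -/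
open scoped RealInnerProductSpace

theorem stmt10 {E : Type*} [NormedAddCommGroup E] [InnerProductSpace ℝ E]
    (X : Set E) (hXconv : Convex ℝ X) (hXcomp : IsCompact X)
    (σ : ℝ) (hσ : 0 < σ) (d : E → ℝ) (g : E → E)
    (hsc : ∀ x ∈ X, ∀ y ∈ X, σ / 2 * ‖y - x‖ ^ 2 ≤ d y - d x - ⟪g x, y - x⟫)
    (x : ℕ → E) (hxX : ∀ i : ℕ, x i ∈ X)
    (hd0 : d (x 0) = 0) (hg0 : g (x 0) = 0)
    (k : ℕ) (hk : 1 ≤ k)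
    (hstep : ∀ i : ℕ, 1 ≤ i → i ≤ k - 1 → 0 ≤ ⟪g (x i), x (i + 1) - x i⟫) :
    σ / 2 * ∑ i ∈ Finset.Icc 1 k, ‖x i - x (i - 1)‖ ^ 2 ≤ d (x k) := by
  induction k with
  | zero => omega
  | succ n ih =>
    rcases Nat.eq_zero_or_pos n with hn | hn
    · subst hn
      have h1 := hsc (x 0) (hxX 0) (x 1) (hxX 1)
      simp only [hd0, hg0, inner_zero_left, sub_zero] at h1
      simpa using h1
    · have ih' := ih hn (fun i h1 h2 => hstep i h1 (by omega))
      have hsum : ∑ i ∈ Finset.Icc 1 (n + 1), ‖x i - x (i - 1)‖ ^ 2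
          = (∑ i ∈ Finset.Icc 1 n, ‖x i - x (i - 1)‖ ^ 2) + ‖x (n+1) - x n‖ ^ 2 := by
        rw [Finset.sum_Icc_succ_top (by omega)]
        simp
      have key := hsc (x n) (hxX n) (x (n + 1)) (hxX (n + 1))
      have hin : 0 ≤ ⟪g (x n), x (n + 1) - x n⟫ := hstep n hn (by omega)
      rw [hsum]
      nlinarith [key, ih', hin]
end

section
/- In the bundle-level setting, let X be convex compact with diameter D_X := max_{x,y∈X}‖x-y‖, let m_1 ≤ m_2 ≤ ⋯ ≤ m_k ≤ f be convex models on X, and suppose the levels l_i satisfy: there exists u ∈ X with m_i(u) ≤ l_i for all i = 1,…,k, and let x_i = argmin{‖x - x_{i-1}‖² : x ∈ X, m_i(x) ≤ l_i}. Then ∑_{i=1}^k ‖x_{i-1} - x_i‖² ≤ D_X², where the norm is Euclidean. -/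
open RealInnerProductSpace

lemma proj_inner_le {E : Type*} [NormedAddCommGroup E] [InnerProductSpace ℝ E]
    {K : Set E} (hK : Convex ℝ K) {z p u : E} (hp : p ∈ K) (hu : u ∈ K)
    (hmin : ∀ y ∈ K, ‖p - z‖ ≤ ‖y - z‖) : ⟪z - p, u - p⟫ ≤ 0 := by
  by_cases hup : u = p
  · simp [hup]
  have hn : (0:ℝ) < ‖u - p‖ ^ 2 :=
    pow_pos (norm_pos_iff.mpr (sub_ne_zero.mpr hup)) 2
  have key : ∀ t : ℝ, 0 < t → t ≤ 1 → ⟪z - p, u - p⟫ ≤ t * ‖u - p‖ ^ 2 / 2 := by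
    intro t ht ht1
    have hw : p + t • (u - p) ∈ K := by
      have := hK hp hu (by linarith : (0:ℝ) ≤ 1 - t) ht.le (by ring)
      convert this using 1
      module
    have h1 : ‖p - z‖ ≤ ‖p + t • (u - p) - z‖ := hmin _ hw
    have h2 : ‖p - z‖ ^ 2 ≤ ‖p + t • (u - p) - z‖ ^ 2 :=
      pow_le_pow_left₀ (norm_nonneg _) h1 2
    have hexp : ‖p + t • (u - p) - z‖ ^ 2
        = ‖p - z‖ ^ 2 + 2 * t * ⟪p - z, u - p⟫ + t ^ 2 * ‖u - p‖ ^ 2 := by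
      have h0 : p + t • (u - p) - z = (p - z) + t • (u - p) := by abel
      rw [h0, norm_add_sq_real, real_inner_smul_right, norm_smul]
      simp [abs_of_pos ht, mul_pow]
      ring
    rw [hexp] at h2
    have hzp : ⟪z - p, u - p⟫ = -⟪p - z, u - p⟫ := by
      rw [← inner_neg_left]; congr 1; abel
    nlinarith [h2]
  by_contra h
  push_neg at h
  set c := ⟪z - p, u - p⟫ with hc
  have ht : ∀ ε : ℝ, 0 < ε → c ≤ ε := by
    intro ε hε
    set t := min 1 (ε / ‖u - p‖ ^ 2) with htdef
    have ht0 : 0 < t := lt_min one_pos (by positivity)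
    have := key t ht0 (min_le_left _ _)
    have h2 : t * ‖u - p‖ ^ 2 ≤ ε := by
      calc t * ‖u - p‖ ^ 2 ≤ (ε / ‖u - p‖ ^ 2) * ‖u - p‖ ^ 2 :=
            mul_le_mul_of_nonneg_right (min_le_right _ _) hn.le
        _ = ε := div_mul_cancel₀ _ hn.ne'
    linarith
  linarith [ht (c/2) (by linarith)]

lemma proj_sq_ineq {E : Type*} [NormedAddCommGroup E] [InnerProductSpace ℝ E]
    {K : Set E} (hK : Convex ℝ K) {z p u : E} (hp : p ∈ K) (hu : u ∈ K)
    (hmin : ∀ y ∈ K, ‖p - z‖ ≤ ‖y - z‖) :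
    ‖p - u‖ ^ 2 + ‖z - p‖ ^ 2 ≤ ‖z - u‖ ^ 2 := by
  have h := proj_inner_le hK hp hu hmin
  have hexp : ‖z - u‖ ^ 2 = ‖z - p‖ ^ 2 - 2 * ⟪z - p, u - p⟫ + ‖u - p‖ ^ 2 := by
    have h0 : z - u = (z - p) - (u - p) := by abel
    rw [h0, norm_sub_sq_real]
  have : ‖p - u‖ = ‖u - p‖ := norm_sub_rev _ _
  rw [this]
  linarith
theorem stmt11 {E : Type*} [NormedAddCommGroup E] [InnerProductSpace ℝ E]
    (X : Set E) (hXconv : Convex ℝ X) (hXcomp : IsCompact X)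
    (D : ℝ) (hD : ∀ a ∈ X, ∀ b ∈ X, ‖a - b‖ ≤ D)
    (k : ℕ) (hk : 1 ≤ k)
    (f : E → ℝ) (m : ℕ → E → ℝ) (l : ℕ → ℝ)
    (hmconv : ∀ i : ℕ, ConvexOn ℝ X (m i))
    (hmmono : ∀ i : ℕ, ∀ x ∈ X, m i x ≤ m (i + 1) x)
    (hmf : ∀ i : ℕ, ∀ x ∈ X, m i x ≤ f x)
    (u : E) (hu : u ∈ X) (hul : ∀ i : ℕ, 1 ≤ i → i ≤ k → m i u ≤ l i)
    (x : ℕ → E) (hx0 : x 0 ∈ X)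
    (hxi : ∀ i : ℕ, 1 ≤ i → i ≤ k →
      x i ∈ X ∧ m i (x i) ≤ l i ∧
      ∀ y ∈ X, m i y ≤ l i → ‖x i - x (i - 1)‖ ≤ ‖y - x (i - 1)‖) :
    ∑ i ∈ Finset.Icc 1 k, ‖x (i - 1) - x i‖ ^ 2 ≤ D ^ 2 := by
  set F : ℕ → ℝ := fun j => ‖x j - u‖ ^ 2 with hF
  have step : ∀ j : ℕ, j < k → ‖x j - x (j + 1)‖ ^ 2 ≤ F j - F (j + 1) := by
    intro j hj
    obtain ⟨hpX, hpl, hmin⟩ := hxi (j + 1) (Nat.le_add_left 1 j) hj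
    set K : Set E := {y ∈ X | m (j + 1) y ≤ l (j + 1)} with hK
    have hKconv : Convex ℝ K := (hmconv (j + 1)).convex_le _
    have hpK : x (j + 1) ∈ K := ⟨hpX, hpl⟩
    have huK : u ∈ K := ⟨hu, hul (j + 1) (Nat.le_add_left 1 j) hj⟩
    have hmin' : ∀ y ∈ K, ‖x (j + 1) - x j‖ ≤ ‖y - x j‖ := by
      intro y hy
      have := hmin y hy.1 hy.2
      simpa using this
    have := proj_sq_ineq hKconv hpK huK hmin'
    simp only [hF]
    linarith
  have hconv : ∑ i ∈ Finset.Icc 1 k, ‖x (i - 1) - x i‖ ^ 2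
      = ∑ j ∈ Finset.range k, ‖x j - x (j + 1)‖ ^ 2 := by
    rw [← Finset.Ico_add_one_right_eq_Icc, Finset.sum_Ico_eq_sum_range]
    simp [add_comm 1]
  rw [hconv]
  have h1 : ∑ j ∈ Finset.range k, ‖x j - x (j + 1)‖ ^ 2
      ≤ ∑ j ∈ Finset.range k, (F j - F (j + 1)) :=
    Finset.sum_le_sum fun j hj => step j (Finset.mem_range.mp hj)
  rw [Finset.sum_range_sub' F k] at h1
  have hFk : 0 ≤ F k := by positivity
  have hF0 : F 0 ≤ D ^ 2 := by
    have := hD (x 0) hx0 u hu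
    have hn : (0:ℝ) ≤ ‖x 0 - u‖ := norm_nonneg _
    simp only [hF]
    nlinarith
  linarith
end

section
/- Let Ψ: ℝ^m → ℝ be convex, monotone nondecreasing in its first m_0 coordinates, and satisfy Ψ(y + δ) - Ψ(y) ≤ M_0 ‖δ‖_1 for all y ∈ ℝ^m and all δ ∈ ℝ^m_+ with δ_i = 0 for i > m_0. Let φ = (φ_1,…,φ_m): X → ℝ^m with each φ_i convex, φ_i satisfying φ_i(x) ≤ φ_i(z) + ⟨φ_i'(z), x - z⟩ + M_i/(1+ρ_i)‖x-z‖^{1+ρ_i} for i ≤ m_0, and φ_i affine for i > m_0. Then for f(x) := Ψ(φ(x)) and h_Ψ(z,x) := Ψ(φ(z) + φ'(z)(x - z)), we have h_Ψ(z,x) ≤ f(x) ≤ h_Ψ(z,x) + M_0 ∑_{i=1}^{m_0} M_i/(1+ρ_i) ‖x - z‖^{1+ρ_i} for all x, z ∈ X. -/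
open scoped RealInnerProductSpace

theorem stmt16 {E : Type*} [NormedAddCommGroup E] [InnerProductSpace ℝ E]
    (X : Set E) (hX : Convex ℝ X) (m m0 : ℕ) (hm0 : m0 ≤ m)
    (Ψ : (Fin m → ℝ) → ℝ) (hΨconv : ConvexOn ℝ Set.univ Ψ)
    (M0 : ℝ) (hM0 : 0 ≤ M0)
    (hmono : ∀ y δ : Fin m → ℝ, (∀ i, 0 ≤ δ i) →
      (∀ i : Fin m, m0 ≤ (i : ℕ) → δ i = 0) → Ψ y ≤ Ψ (y + δ))
    (hlip : ∀ y δ : Fin m → ℝ, (∀ i, 0 ≤ δ i) →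
      (∀ i : Fin m, m0 ≤ (i : ℕ) → δ i = 0) → Ψ (y + δ) - Ψ y ≤ M0 * ∑ i, |δ i|)
    (φ : Fin m → E → ℝ) (φ' : Fin m → E → E) (M ρ : Fin m → ℝ)
    (hρ : ∀ i : Fin m, 0 ≤ ρ i ∧ ρ i ≤ 1)
    (hM : ∀ i : Fin m, (i : ℕ) < m0 → 0 < M i)
    (hconv : ∀ i : Fin m, ∀ z ∈ X, ∀ x ∈ X, φ i z + ⟪φ' i z, x - z⟫ ≤ φ i x)
    (hsmooth : ∀ i : Fin m, (i : ℕ) < m0 → ∀ z ∈ X, ∀ x ∈ X,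
      φ i x ≤ φ i z + ⟪φ' i z, x - z⟫ + M i / (1 + ρ i) * ‖x - z‖ ^ (1 + ρ i))
    (haff : ∀ i : Fin m, m0 ≤ (i : ℕ) → ∀ z ∈ X, ∀ x ∈ X,
      φ i x = φ i z + ⟪φ' i z, x - z⟫) :
    ∀ z ∈ X, ∀ x ∈ X,
      Ψ (fun i => φ i z + ⟪φ' i z, x - z⟫) ≤ Ψ (fun i => φ i x) ∧
      Ψ (fun i => φ i x) ≤ Ψ (fun i => φ i z + ⟪φ' i z, x - z⟫) +
        M0 * ∑ i ∈ Finset.univ.filter (fun i : Fin m => (i : ℕ) < m0),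
          M i / (1 + ρ i) * ‖x - z‖ ^ (1 + ρ i) := by
  intro z hz x hx
  set y : Fin m → ℝ := fun i => φ i z + ⟪φ' i z, x - z⟫ with hy
  set δ : Fin m → ℝ := fun i => φ i x - y i with hδ
  have hδnn : ∀ i, 0 ≤ δ i := fun i => by
    simp only [hδ, hy, sub_nonneg]; exact hconv i z hz x hx
  have hδ0 : ∀ i : Fin m, m0 ≤ (i : ℕ) → δ i = 0 := fun i hi => by
    simp only [hδ, hy, sub_eq_zero]; exact haff i hi z hz x hx
  have hyd : y + δ = fun i => φ i x := by funext i; simp [hδ]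
  constructor
  · have := hmono y δ hδnn hδ0
    rwa [hyd] at this
  · have h1 := hlip y δ hδnn hδ0
    rw [hyd] at h1
    have h2 : ∑ i, |δ i| ≤ ∑ i ∈ Finset.univ.filter (fun i : Fin m => (i : ℕ) < m0),
        M i / (1 + ρ i) * ‖x - z‖ ^ (1 + ρ i) := by
      rw [← Finset.sum_filter_add_sum_filter_not Finset.univ (fun i : Fin m => (i : ℕ) < m0)
        (fun i => |δ i|)]
      have hz0 : ∑ i ∈ Finset.univ.filter (fun i : Fin m => ¬ (i : ℕ) < m0), |δ i| = 0 := by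
        apply Finset.sum_eq_zero
        intro i hi
        simp only [Finset.mem_filter, not_lt] at hi
        rw [hδ0 i hi.2, abs_zero]
      rw [hz0, add_zero]
      apply Finset.sum_le_sum
      intro i hi
      simp only [Finset.mem_filter] at hi
      rw [abs_of_nonneg (hδnn i)]
      have := hsmooth i hi.2 z hz x hx
      simp only [hδ, hy]
      linarith
    have h3 : M0 * ∑ i, |δ i| ≤ M0 * ∑ i ∈ Finset.univ.filter (fun i : Fin m => (i : ℕ) < m0),
        M i / (1 + ρ i) * ‖x - z‖ ^ (1 + ρ i) := mul_le_mul_of_nonneg_left h2 hM0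
    linarith
end

section
/- Let Y ⊆ ℝ^m be convex compact, A: ℝⁿ → ℝ^m linear with operator norm ‖A‖, v a prox-function of Y with strong convexity modulus σ_v and D_{v,Y} := max_{y,z∈Y}{v(y) - v(z) - ⟨∇v(z), y-z⟩}, and F(x) := max_{y∈Y}{⟨Ax,y⟩ - ĝ(y)} for a continuous convex ĝ. Then for all x_0, x_1 ∈ ℝⁿ and any subgradient F'(x_1) ∈ ∂F(x_1): F(x_0) - F(x_1) - ⟨F'(x_1), x_0 - x_1⟩ ≤ 2 (2‖A‖² D_{v,Y}/σ_v)^{1/2} ‖x_0 - x_1‖. -/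
open scoped RealInnerProductSpace

theorem stmt18 {E F : Type*} [NormedAddCommGroup E] [InnerProductSpace ℝ E]
    [NormedAddCommGroup F] [InnerProductSpace ℝ F]
    (Y : Set F) (hYconv : Convex ℝ Y) (hYcomp : IsCompact Y) (hYne : Y.Nonempty)
    (g : F → ℝ) (hgconv : ConvexOn ℝ Y g) (hgcont : ContinuousOn g Y)
    (A : E →L[ℝ] F) (v : F → ℝ) (gv : F → F) (σv D : ℝ)
    (hσ : 0 < σv) (hDpos : 0 < D)
    (hsc : ∀ z ∈ Y, ∀ y ∈ Y, σv / 2 * ‖y - z‖ ^ 2 ≤ v y - v z - ⟪gv z, y - z⟫)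
    (hD : ∀ z ∈ Y, ∀ y ∈ Y, v y - v z - ⟪gv z, y - z⟫ ≤ D)
    (Fn : E → ℝ) (hFn : ∀ x : E, Fn x = sSup ((fun y => ⟪A x, y⟫ - g y) '' Y))
    (x0 x1 : E) (s : E)
    (hsub : ∀ w : E, Fn x1 + ⟪s, w - x1⟫ ≤ Fn w) :
    Fn x0 - Fn x1 - ⟪s, x0 - x1⟫ ≤
      2 * Real.sqrt (2 * ‖A‖ ^ 2 * D / σv) * ‖x0 - x1‖ := by
  have hcont : ∀ x : E, ContinuousOn (fun y => ⟪A x, y⟫ - g y) Y := fun x =>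
    ((continuous_const.inner continuous_id).continuousOn).sub hgcont
  obtain ⟨y0, hy0Y, hy0⟩ := hYcomp.exists_isMaxOn hYne (hcont x0)
  obtain ⟨y2, hy2Y, hy2⟩ := hYcomp.exists_isMaxOn hYne (hcont (2 • x1 - x0))
  have hbdd : BddAbove ((fun y => ⟪A x1, y⟫ - g y) '' Y) :=
    hYcomp.bddAbove_image (hcont x1)
  have h1 : Fn x0 ≤ ⟪A x0, y0⟫ - g y0 := by
    rw [hFn]
    exact csSup_le (hYne.image _) (by rintro b ⟨y, hy, rfl⟩; exact hy0 hy)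
  have h2 : ⟪A x1, y0⟫ - g y0 ≤ Fn x1 := by
    rw [hFn]; exact le_csSup hbdd ⟨y0, hy0Y, rfl⟩
  have h3 : Fn (2 • x1 - x0) ≤ ⟪A (2 • x1 - x0), y2⟫ - g y2 := by
    rw [hFn]
    exact csSup_le (hYne.image _) (by rintro b ⟨y, hy, rfl⟩; exact hy2 hy)
  have h4 : ⟪A x1, y2⟫ - g y2 ≤ Fn x1 := by
    rw [hFn]; exact le_csSup hbdd ⟨y2, hy2Y, rfl⟩
  have h5 : Fn x1 + ⟪s, (2 • x1 - x0) - x1⟫ ≤ Fn (2 • x1 - x0) := hsub _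
  have hinn : ⟪s, (2 • x1 - x0) - x1⟫ = -⟪s, x0 - x1⟫ := by
    rw [← inner_neg_right]
    congr 1
    module
  -- combine the inner products
  have key : Fn x0 - Fn x1 - ⟪s, x0 - x1⟫ ≤ ⟪A x0 - A x1, y0 - y2⟫ := by
    have e1 : ⟪A x0, y0⟫ - ⟪A x1, y0⟫ = ⟪A x0 - A x1, y0⟫ := (inner_sub_left _ _ _).symm
    have e2 : ⟪A (2 • x1 - x0), y2⟫ - ⟪A x1, y2⟫ = -⟪A x0 - A x1, y2⟫ := by
      have : A (2 • x1 - x0) - A x1 = -(A x0 - A x1) := by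
        simp [map_sub, map_smul, two_smul]; abel
      rw [← inner_sub_left, this, inner_neg_left]
    have e3 : ⟪A x0 - A x1, y0⟫ - ⟪A x0 - A x1, y2⟫ = ⟪A x0 - A x1, y0 - y2⟫ :=
      (inner_sub_right _ _ _).symm
    linarith [h1, h2, h3, h4, h5, hinn, e1, e2, e3]
  have hdiam : ‖y0 - y2‖ ≤ Real.sqrt (2 * D / σv) := by
    have h6 := (hsc y2 hy2Y y0 hy0Y).trans (hD y2 hy2Y y0 hy0Y)
    have hsq : ‖y0 - y2‖ ^ 2 ≤ 2 * D / σv := by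
      rw [le_div_iff₀ hσ]; nlinarith
    have := Real.sqrt_le_sqrt hsq
    rwa [Real.sqrt_sq (norm_nonneg _)] at this
  have hAx : ‖A x0 - A x1‖ ≤ ‖A‖ * ‖x0 - x1‖ := by
    rw [← map_sub]; exact A.le_opNorm _
  have hcs : ⟪A x0 - A x1, y0 - y2⟫ ≤ ‖A x0 - A x1‖ * ‖y0 - y2‖ :=
    real_inner_le_norm _ _
  have hsqrt : Real.sqrt (2 * ‖A‖ ^ 2 * D / σv) = ‖A‖ * Real.sqrt (2 * D / σv) := by
    rw [show 2 * ‖A‖ ^ 2 * D / σv = ‖A‖ ^ 2 * (2 * D / σv) by ring,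
      Real.sqrt_mul (sq_nonneg _), Real.sqrt_sq (norm_nonneg _)]
  have hfin : ‖A x0 - A x1‖ * ‖y0 - y2‖ ≤ (‖A‖ * ‖x0 - x1‖) * Real.sqrt (2 * D / σv) :=
    mul_le_mul hAx hdiam (norm_nonneg _) (by positivity)
  calc Fn x0 - Fn x1 - ⟪s, x0 - x1⟫ ≤ ⟪A x0 - A x1, y0 - y2⟫ := key
    _ ≤ ‖A x0 - A x1‖ * ‖y0 - y2‖ := hcs
    _ ≤ (‖A‖ * ‖x0 - x1‖) * Real.sqrt (2 * D / σv) := hfin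
    _ ≤ 2 * Real.sqrt (2 * ‖A‖ ^ 2 * D / σv) * ‖x0 - x1‖ := by
        rw [hsqrt]
        have h0 : 0 ≤ ‖A‖ * Real.sqrt (2 * D / σv) * ‖x0 - x1‖ := by positivity
        nlinarith
end
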